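/- The number of partitions of n all of whose successive ranks lie in {0,1} equals the number of partitions of n whose successive parts differ by at least 2. -/

import Mathlib

/-!
Cut a partition `π` along its Durfee square of side `d`: it is determined by `d`, its first `d`
rows `π i` and its first `d` columns `π' i`, and any two nonincreasing sequences of length `d`
with all terms at least `d` occur. The hook lengths `α i = π i + π' i + 1 - 2 i` form a
partition of the same number with `d` parts, and `α i + 2 i = π i + π' i + 1` is nonincreasing,
so the parts of `α` differ by at least `2`. When all successive ranks `π i - π' i` are `0` or
`1`, `π i` and `π' i` are the two halves of `α i + 2 i - 1`, so `π` is recovered from `α`.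
Conversely, if the parts of `α` differ by at least `2`, then `α i + 2 i` is nonincreasing and
exceeds `2 d` on `[1, d]`, so these halves are admissible rows and columns, and the partition
they define has hook lengths `α` and successive ranks in `{0, 1}`.
-/

/-- The conjugate partition: `conj π i = #{j ≥ 1 : π j ≥ i}`. -/
noncomputable def conj (π : ℕ → ℕ) (i : ℕ) : ℕ := {j : ℕ | 1 ≤ j ∧ i ≤ π j}.ncard

/-- A partition, as a function from part indices (starting at 1) to part sizes:
nonincreasing on indices ≥ 1, eventually zero, with the unused index 0 set to 0. -/
def IsPartition (π : ℕ → ℕ) : Prop :=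
  π 0 = 0 ∧ (∀ i j, 1 ≤ i → i ≤ j → π j ≤ π i) ∧ ∃ N, ∀ j, N ≤ j → π j = 0

/-- The number partitioned, i.e. the sum of all parts. -/
noncomputable def size (π : ℕ → ℕ) : ℕ := ∑' j, π j

/-- The Durfee square size: the largest `d` with `π d ≥ d`. -/
noncomputable def durfee (π : ℕ → ℕ) : ℕ := sSup {d : ℕ | d ≤ π d}

/-- The number of parts. -/
noncomputable def len (π : ℕ → ℕ) : ℕ := conj π 1

/-- The `i`-th successive rank `r_i = π_i - π'_i`. -/
noncomputable def rank (π : ℕ → ℕ) (i : ℕ) : ℤ := (π i : ℤ) - (conj π i : ℤ)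

/-- The `i`-th angle (hook) length `α_i = π_i + π'_i - 2 i + 1`, as an integer. -/
noncomputable def ang (π : ℕ → ℕ) (i : ℕ) : ℤ := (π i : ℤ) + (conj π i : ℤ) - 2 * i + 1

/-- The partition `α(π)` of angle lengths: `α_i = π_i + π'_i - 2 i + 1` for `1 ≤ i ≤ d(π)`,
and `0` outside that range. -/
noncomputable def angPart (π : ℕ → ℕ) (i : ℕ) : ℕ :=
  if 1 ≤ i ∧ i ≤ durfee π then π i + conj π i + 1 - 2 * i else 0

open Finset

/-- The partition with a Durfee square of side `d`, first rows `a 1, …, a d` and first columns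
`b 1, …, b d`. -/
def ofDurfeeRowsCols (d : ℕ) (a b : ℕ → ℕ) (j : ℕ) : ℕ :=
  if j = 0 then 0 else if j ≤ d then a j else #{i ∈ Icc 1 d | j ≤ b i}

lemma conj_eq_of_forall_le_iff {π : ℕ → ℕ} {i c : ℕ}
    (h : ∀ j, 1 ≤ j → (i ≤ π j ↔ j ≤ c)) : conj π i = c := by
  have hS : {j | 1 ≤ j ∧ i ≤ π j} = Set.Icc 1 c := by
    ext j
    simp only [Set.mem_ofPred_eq, Set.mem_Icc]
    exact and_congr_right (h j)
  rw [conj, hS, Set.ncard_Icc_nat, Nat.add_sub_cancel]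

lemma size_eq_sum_Icc {f : ℕ → ℕ} {N : ℕ} (h0 : f 0 = 0) (hN : ∀ j, N < j → f j = 0) :
    size f = ∑ j ∈ Icc 1 N, f j := by
  refine tsum_eq_sum fun j hj => ?_
  rcases Nat.eq_zero_or_pos j with rfl | hj0
  · exact h0
  · exact hN j (by simp only [mem_Icc, not_and_or, not_le] at hj; omega)

lemma sum_Icc_two_mul_sub_one (d : ℕ) : ∑ i ∈ Icc 1 d, (2 * i - 1) = d * d := by
  induction d with
  | zero => simp
  | succ d ih =>
    rw [sum_Icc_succ_top (by omega), ih]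
    ring_nf
    omega

namespace IsPartition

variable {π : ℕ → ℕ} (hπ : IsPartition π)
include hπ

lemma le_conj_iff {i j : ℕ} (hi : 1 ≤ i) (hj : 1 ≤ j) : j ≤ conj π i ↔ i ≤ π j := by
  obtain ⟨c, hc⟩ : ∃ c, ∀ j, 1 ≤ j → (i ≤ π j ↔ j ≤ c) := by
    obtain ⟨N, hN⟩ := hπ.2.2
    refine ⟨Nat.findGreatest (i ≤ π ·) N, fun j hj => ⟨fun hij => ?_, fun hjc => ?_⟩⟩
    · refine Nat.le_findGreatest (not_lt.1 fun hNj => ?_) hij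
      have := hN j hNj.le
      omega
    · have := Nat.findGreatest_of_ne_zero (P := (i ≤ π ·)) (n := N) rfl (by omega)
      exact this.trans (hπ.2.1 j _ hj hjc)
  rw [conj_eq_of_forall_le_iff hc, hc j hj]

lemma conj_le_conj {i j : ℕ} (hi : 1 ≤ i) (hij : i ≤ j) : conj π j ≤ conj π i := by
  rcases Nat.eq_zero_or_pos (conj π j) with h | h
  · omega
  · exact (hπ.le_conj_iff hi h).2 <| hij.trans <| (hπ.le_conj_iff (hi.trans hij) h).1 le_rfl

lemma apply_eq_zero_of_len_lt {j : ℕ} (hj : len π < j) : π j = 0 := by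
  by_contra h
  exact not_le.2 hj <| (hπ.le_conj_iff le_rfl (by omega)).2 (by omega)

lemma bddAbove_setOf_le_apply : BddAbove {k | k ≤ π k} := by
  refine ⟨π 1, fun k (hk : k ≤ π k) => ?_⟩
  rcases Nat.eq_zero_or_pos k with rfl | hk1
  · exact Nat.zero_le _
  · exact hk.trans (hπ.2.1 1 k le_rfl hk1)

lemma le_durfee {k : ℕ} (hk : k ≤ π k) : k ≤ durfee π :=
  le_csSup hπ.bddAbove_setOf_le_apply hk

lemma durfee_le_apply_durfee : durfee π ≤ π (durfee π) :=
  Nat.sSup_mem (s := {k | k ≤ π k}) ⟨0, Nat.zero_le _⟩ hπ.bddAbove_setOf_le_apply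

lemma durfee_le_apply {i : ℕ} (hi : 1 ≤ i) (hid : i ≤ durfee π) : durfee π ≤ π i :=
  hπ.durfee_le_apply_durfee.trans (hπ.2.1 i _ hi hid)

lemma durfee_le_conj_durfee : durfee π ≤ conj π (durfee π) := by
  rcases Nat.eq_zero_or_pos (durfee π) with h | h
  · omega
  · exact (hπ.le_conj_iff h h).2 hπ.durfee_le_apply_durfee

lemma durfee_le_conj {i : ℕ} (hi : 1 ≤ i) (hid : i ≤ durfee π) : durfee π ≤ conj π i :=
  hπ.durfee_le_conj_durfee.trans (hπ.conj_le_conj hi hid)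

lemma apply_le_durfee {j : ℕ} (hj : durfee π < j) : π j ≤ durfee π := by
  by_contra h
  have := hπ.le_durfee (k := durfee π + 1) ((Nat.succ_le_of_lt (not_le.1 h)).trans
    (hπ.2.1 _ j (by omega) hj))
  omega

lemma durfee_eq {d : ℕ} (hd : d ≤ π d) (hd' : π (d + 1) ≤ d) : durfee π = d := by
  refine le_antisymm (not_lt.1 fun h => ?_) (hπ.le_durfee hd)
  have := hπ.durfee_le_apply_durfee.trans (hπ.2.1 (d + 1) _ (by omega) h)
  omega

lemma eq_ofDurfeeRowsCols : π = ofDurfeeRowsCols (durfee π) π (conj π) := by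
  funext j
  unfold ofDurfeeRowsCols
  split_ifs with hj0 hjd
  · rw [hj0, hπ.1]
  · rfl
  · have htail : {i ∈ Icc 1 (durfee π) | j ≤ conj π i} = Icc 1 (π j) := by
      ext i
      simp only [mem_filter, mem_Icc]
      have := hπ.apply_le_durfee (not_le.1 hjd)
      constructor
      · rintro ⟨⟨hi, -⟩, hji⟩
        exact ⟨hi, (hπ.le_conj_iff hi (by omega)).1 hji⟩
      · rintro ⟨hi, hij⟩
        exact ⟨⟨hi, by omega⟩, (hπ.le_conj_iff hi (by omega)).2 hij⟩
    rw [htail, Nat.card_Icc, Nat.add_sub_cancel]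

end IsPartition

lemma le_card_filter_le_iff {d i j : ℕ} {b : ℕ → ℕ} (hb : AntitoneOn b (Set.Icc 1 d))
    (hi : 1 ≤ i) (hid : i ≤ d) : i ≤ #{k ∈ Icc 1 d | j ≤ b k} ↔ j ≤ b i := by
  constructor
  · intro h
    by_contra hji
    have hsub : {k ∈ Icc 1 d | j ≤ b k} ⊆ Icc 1 (i - 1) := by
      intro k hk
      simp only [mem_filter, mem_Icc] at hk ⊢
      refine ⟨hk.1.1, not_lt.1 fun hik => ?_⟩
      have := hb ⟨hi, hid⟩ ⟨hk.1.1, hk.1.2⟩ (by omega : i ≤ k)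
      omega
    have := card_le_card hsub
    rw [Nat.card_Icc] at this
    omega
  · intro h
    have hsub : Icc 1 i ⊆ {k ∈ Icc 1 d | j ≤ b k} := by
      intro k hk
      simp only [mem_filter, mem_Icc] at hk ⊢
      have hkd := hk.2.trans hid
      exact ⟨⟨hk.1, hkd⟩, h.trans (hb ⟨hk.1, hkd⟩ ⟨hi, hid⟩ hk.2)⟩
    simpa using card_le_card hsub

section OfDurfeeRowsCols

variable {d : ℕ} {a b : ℕ → ℕ}

lemma ofDurfeeRowsCols_of_le {j : ℕ} (hj : 1 ≤ j) (hjd : j ≤ d) :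
    ofDurfeeRowsCols d a b j = a j := by
  rw [ofDurfeeRowsCols, if_neg (by omega), if_pos hjd]

lemma ofDurfeeRowsCols_of_lt {j : ℕ} (hdj : d < j) :
    ofDurfeeRowsCols d a b j = #{i ∈ Icc 1 d | j ≤ b i} := by
  rw [ofDurfeeRowsCols, if_neg (by omega), if_neg (by omega)]

lemma ofDurfeeRowsCols_le_of_lt {j : ℕ} (hdj : d < j) : ofDurfeeRowsCols d a b j ≤ d := by
  rw [ofDurfeeRowsCols_of_lt hdj]
  exact (card_filter_le _ _).trans (by simp)

lemma ofDurfeeRowsCols_eq_zero {j : ℕ} (hj : d + (Icc 1 d).sup b < j) :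
    ofDurfeeRowsCols d a b j = 0 := by
  rw [ofDurfeeRowsCols_of_lt (by omega), card_eq_zero, filter_eq_empty_iff]
  intro i hi
  have := le_sup (f := b) hi
  omega

lemma ofDurfeeRowsCols_congr {a' b' : ℕ → ℕ} (ha : Set.EqOn a a' (Set.Icc 1 d))
    (hb : Set.EqOn b b' (Set.Icc 1 d)) : ofDurfeeRowsCols d a b = ofDurfeeRowsCols d a' b' := by
  funext j
  unfold ofDurfeeRowsCols
  split_ifs with hj0 hjd
  · rfl
  · exact ha ⟨by omega, hjd⟩
  · exact congrArg card (filter_congr fun i hi => by rw [hb (by simpa using hi)])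

lemma isPartition_ofDurfeeRowsCols (ha : AntitoneOn a (Set.Icc 1 d)) (had : d ≤ a d) :
    IsPartition (ofDurfeeRowsCols d a b) := by
  refine ⟨rfl, fun i j hi hij => ?_, d + (Icc 1 d).sup b + 1, fun j hj => ?_⟩
  · rcases le_or_gt j d with hjd | hdj
    · rw [ofDurfeeRowsCols_of_le hi (hij.trans hjd), ofDurfeeRowsCols_of_le (hi.trans hij) hjd]
      exact ha ⟨hi, hij.trans hjd⟩ ⟨hi.trans hij, hjd⟩ hij
    rcases le_or_gt i d with hid | hdi
    · rw [ofDurfeeRowsCols_of_le hi hid]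
      exact (ofDurfeeRowsCols_le_of_lt hdj).trans
        (had.trans (ha ⟨hi, hid⟩ ⟨by omega, le_rfl⟩ hid))
    · rw [ofDurfeeRowsCols_of_lt hdj, ofDurfeeRowsCols_of_lt hdi]
      exact card_le_card (monotone_filter_right _ fun k _ hjk => hij.trans hjk)
  · exact ofDurfeeRowsCols_eq_zero (by omega)

lemma durfee_ofDurfeeRowsCols (ha : AntitoneOn a (Set.Icc 1 d)) (had : d ≤ a d) :
    durfee (ofDurfeeRowsCols d a b) = d := by
  refine (isPartition_ofDurfeeRowsCols ha had).durfee_eq ?_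
    (ofDurfeeRowsCols_le_of_lt d.lt_succ_self)
  rcases Nat.eq_zero_or_pos d with rfl | hd
  · exact Nat.zero_le _
  · rwa [ofDurfeeRowsCols_of_le hd le_rfl]

lemma conj_ofDurfeeRowsCols (ha : AntitoneOn a (Set.Icc 1 d)) (had : d ≤ a d)
    (hb : AntitoneOn b (Set.Icc 1 d)) (hbd : d ≤ b d) {i : ℕ} (hi : 1 ≤ i) (hid : i ≤ d) :
    conj (ofDurfeeRowsCols d a b) i = b i := by
  refine conj_eq_of_forall_le_iff fun j hj => ?_
  rcases le_or_gt j d with hjd | hdj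
  · rw [ofDurfeeRowsCols_of_le hj hjd]
    have := ha ⟨hj, hjd⟩ ⟨by omega, le_rfl⟩ hjd
    have := hb ⟨hi, hid⟩ ⟨by omega, le_rfl⟩ hid
    omega
  · rw [ofDurfeeRowsCols_of_lt hdj, le_card_filter_le_iff hb hi hid]

lemma size_ofDurfeeRowsCols (hb : AntitoneOn b (Set.Icc 1 d)) (hbd : d ≤ b d) :
    size (ofDurfeeRowsCols d a b) + d * d = ∑ i ∈ Icc 1 d, (a i + b i) := by
  set N := d + (Icc 1 d).sup b
  have hbN : ∀ i ∈ Icc 1 d, b i ≤ N := fun i hi => (le_sup (f := b) hi).trans (by omega)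
  have hdb : ∀ i ∈ Icc 1 d, d ≤ b i := fun i hi => by
    obtain ⟨hi1, hid⟩ := mem_Icc.1 hi
    exact hbd.trans (hb ⟨hi1, hid⟩ ⟨by omega, le_rfl⟩ hid)
  have hrows : ∑ j ∈ Ioc 0 d, ofDurfeeRowsCols d a b j = ∑ i ∈ Icc 1 d, a i :=
    sum_congr rfl fun j hj => ofDurfeeRowsCols_of_le (mem_Ioc.1 hj).1 (mem_Ioc.1 hj).2
  have htail : ∑ j ∈ Ioc d N, ofDurfeeRowsCols d a b j = ∑ i ∈ Icc 1 d, (b i - d) := by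
    rw [sum_congr rfl fun j hj => ofDurfeeRowsCols_of_lt (mem_Ioc.1 hj).1]
    refine (sum_card_bipartiteAbove_eq_sum_card_bipartiteBelow (r := fun j i => j ≤ b i)).trans
      (sum_congr rfl fun i hi => ?_)
    have hcol : {j ∈ Ioc d N | j ≤ b i} = Ioc d (b i) := by
      ext j
      simp only [mem_filter, mem_Ioc]
      have := hbN i hi
      omega
    rw [bipartiteBelow, hcol, Nat.card_Ioc]
  have hsquare : ∑ i ∈ Icc 1 d, (b i - d) + d * d = ∑ i ∈ Icc 1 d, b i := by
    calc ∑ i ∈ Icc 1 d, (b i - d) + d * d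
      _ = ∑ i ∈ Icc 1 d, (b i - d) + ∑ _i ∈ Icc 1 d, d := by simp
      _ = ∑ i ∈ Icc 1 d, b i := by
          rw [← sum_add_distrib]
          exact sum_congr rfl fun i hi => Nat.sub_add_cancel (hdb i hi)
  rw [size_eq_sum_Icc (N := N) rfl fun j => ofDurfeeRowsCols_eq_zero,
    show Icc 1 N = Ioc 0 N from Icc_add_one_left_eq_Ioc 0 N,
    ← sum_Ioc_consecutive _ (Nat.zero_le d) (by omega : d ≤ N), hrows, htail, sum_add_distrib]
  omega

end OfDurfeeRowsCols

namespace IsPartition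

variable {π : ℕ → ℕ} (hπ : IsPartition π)
include hπ

lemma antitoneOn_conj : AntitoneOn (conj π) (Set.Ici 1) :=
  fun _ hi _ _ hij => hπ.conj_le_conj hi hij

lemma size_add_durfee_mul_self :
    size π + durfee π * durfee π = ∑ i ∈ Icc 1 (durfee π), (π i + conj π i) := by
  have h := size_ofDurfeeRowsCols (a := π)
    (hπ.antitoneOn_conj.mono Set.Icc_subset_Ici_self) hπ.durfee_le_conj_durfee
  rwa [← hπ.eq_ofDurfeeRowsCols] at h

lemma angPart_add_two_mul {i : ℕ} (hi : 1 ≤ i) (hid : i ≤ durfee π) :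
    angPart π i + 2 * i = π i + conj π i + 1 := by
  have := hπ.durfee_le_apply hi hid
  have := hπ.durfee_le_conj hi hid
  rw [angPart, if_pos ⟨hi, hid⟩]
  omega

lemma len_le_cols_len : len π ≤ (π (len π) + 2 * len π - 1) / 2 := by
  rcases Nat.eq_zero_or_pos (len π) with h | h
  · omega
  · have := (hπ.le_conj_iff le_rfl h).1 le_rfl
    omega

lemma len_le_rows_len : len π ≤ (π (len π) + 2 * len π) / 2 :=
  hπ.len_le_cols_len.trans (Nat.div_le_div_right (Nat.sub_le _ _))

lemma isPartition_angPart : IsPartition (angPart π) := by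
  refine ⟨by simp [angPart], fun i j hi hij => ?_, durfee π + 1, fun j hj => ?_⟩
  · by_cases hjd : j ≤ durfee π
    · have := hπ.angPart_add_two_mul hi (hij.trans hjd)
      have := hπ.angPart_add_two_mul (hi.trans hij) hjd
      have := hπ.2.1 i j hi hij
      have := hπ.conj_le_conj hi hij
      omega
    · rw [angPart, if_neg (by omega)]
      exact Nat.zero_le _
  · rw [angPart, if_neg (by omega)]

lemma len_angPart : len (angPart π) = durfee π := by
  refine conj_eq_of_forall_le_iff fun j hj => ?_
  by_cases hjd : j ≤ durfee π
  · have := hπ.angPart_add_two_mul hj hjd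
    have := hπ.durfee_le_apply hj hjd
    have := hπ.durfee_le_conj hj hjd
    omega
  · rw [angPart, if_neg (by omega)]
    omega

lemma angPart_succ_add_two_le {i : ℕ} (hi : 1 ≤ i) (hid : i + 1 ≤ durfee π) :
    angPart π (i + 1) + 2 ≤ angPart π i := by
  have := hπ.angPart_add_two_mul hi (by omega)
  have := hπ.angPart_add_two_mul (by omega) hid
  have := hπ.2.1 i (i + 1) hi (by omega)
  have := hπ.conj_le_conj hi (by omega : i ≤ i + 1)
  omega

lemma size_angPart : size (angPart π) = size π := by
  have hhooks : ∑ i ∈ Icc 1 (durfee π), angPart π i +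
      ∑ i ∈ Icc 1 (durfee π), (2 * i - 1) = ∑ i ∈ Icc 1 (durfee π), (π i + conj π i) := by
    rw [← sum_add_distrib]
    refine sum_congr rfl fun i hi => ?_
    obtain ⟨hi1, hid⟩ := mem_Icc.1 hi
    have := hπ.angPart_add_two_mul hi1 hid
    omega
  have := hπ.size_add_durfee_mul_self
  rw [sum_Icc_two_mul_sub_one] at hhooks
  rw [size_eq_sum_Icc (N := durfee π) (by simp [angPart])
    fun j hj => by rw [angPart, if_neg (by omega)]]
  omega

end IsPartition

/-- Rows and columns are `α i + 2 i - 1 = π i + π' i` halved, rounded up and down. -/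
noncomputable def ofHooks (α : ℕ → ℕ) : ℕ → ℕ :=
  ofDurfeeRowsCols (len α) (fun i => (α i + 2 * i) / 2) (fun i => (α i + 2 * i - 1) / 2)

lemma IsPartition.ofHooks_angPart {π : ℕ → ℕ} (hπ : IsPartition π)
    (hrank : ∀ i, 1 ≤ i → i ≤ durfee π → rank π i ∈ ({0, 1} : Set ℤ)) :
    ofHooks (angPart π) = π := by
  rw [ofHooks, hπ.len_angPart]
  conv_rhs => rw [hπ.eq_ofDurfeeRowsCols]
  refine ofDurfeeRowsCols_congr (fun i hi => ?_) (fun i hi => ?_) <;>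
  · have := hπ.angPart_add_two_mul hi.1 hi.2
    have := hrank i hi.1 hi.2
    simp only [rank, Set.mem_insert_iff, Set.mem_singleton_iff] at this
    omega

section Gap

variable {α : ℕ → ℕ} (hgap : ∀ i, 1 ≤ i → i + 1 ≤ len α → α (i + 1) + 2 ≤ α i)
include hgap

lemma antitoneOn_add_two_mul : AntitoneOn (fun i => α i + 2 * i) (Set.Icc 1 (len α)) :=
  antitoneOn_of_succ_le Set.ordConnected_Icc fun i _ hi hsi => by
    have := hgap i hi.1 (Order.succ_eq_add_one i ▸ hsi.2)
    simp only [Order.succ_eq_add_one]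
    omega

lemma antitoneOn_rows : AntitoneOn (fun i => (α i + 2 * i) / 2) (Set.Icc 1 (len α)) :=
  fun _ hi _ hj hij => Nat.div_le_div_right (antitoneOn_add_two_mul hgap hi hj hij)

lemma antitoneOn_cols : AntitoneOn (fun i => (α i + 2 * i - 1) / 2) (Set.Icc 1 (len α)) :=
  fun _ hi _ hj hij =>
    Nat.div_le_div_right (Nat.sub_le_sub_right (antitoneOn_add_two_mul hgap hi hj hij) 1)

variable (hα : IsPartition α)
include hα

lemma isPartition_ofHooks : IsPartition (ofHooks α) :=
  isPartition_ofDurfeeRowsCols (antitoneOn_rows hgap) hα.len_le_rows_len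

lemma durfee_ofHooks : durfee (ofHooks α) = len α :=
  durfee_ofDurfeeRowsCols (antitoneOn_rows hgap) hα.len_le_rows_len

lemma conj_ofHooks {i : ℕ} (hi : 1 ≤ i) (hid : i ≤ len α) :
    conj (ofHooks α) i = (α i + 2 * i - 1) / 2 :=
  conj_ofDurfeeRowsCols (antitoneOn_rows hgap) hα.len_le_rows_len
    (antitoneOn_cols hgap) hα.len_le_cols_len hi hid

lemma angPart_ofHooks : angPart (ofHooks α) = α := by
  funext i
  by_cases hi : 1 ≤ i ∧ i ≤ len α
  · rw [angPart, durfee_ofHooks hgap hα, if_pos hi, conj_ofHooks hgap hα hi.1 hi.2, ofHooks,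
      ofDurfeeRowsCols_of_le hi.1 hi.2]
    omega
  · rw [angPart, durfee_ofHooks hgap hα, if_neg hi]
    rcases Nat.eq_zero_or_pos i with rfl | hi1
    · exact hα.1.symm
    · exact (hα.apply_eq_zero_of_len_lt (by omega)).symm

lemma rank_ofHooks {i : ℕ} (hi : 1 ≤ i) (hid : i ≤ durfee (ofHooks α)) :
    rank (ofHooks α) i ∈ ({0, 1} : Set ℤ) := by
  rw [durfee_ofHooks hgap hα] at hid
  rw [rank, conj_ofHooks hgap hα hi hid, ofHooks, ofDurfeeRowsCols_of_le hi hid]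
  simp only [Set.mem_insert_iff, Set.mem_singleton_iff]
  omega

lemma size_ofHooks : size (ofHooks α) = size α := by
  rw [← (isPartition_ofHooks hgap hα).size_angPart, angPart_ofHooks hgap hα]

end Gap

theorem stmt7 (n : ℕ) :
    {π | IsPartition π ∧ size π = n ∧
        ∀ i, 1 ≤ i → i ≤ durfee π → rank π i ∈ ({0, 1} : Set ℤ)}.ncard =
    {α | IsPartition α ∧ size α = n ∧
        (∀ i, 1 ≤ i → i + 1 ≤ len α → α (i + 1) + 2 ≤ α i)}.ncard := by
  refine Set.BijOn.ncard_eq (f := angPart) (Set.InvOn.bijOn (f' := ofHooks) ⟨?_, ?_⟩ ?_ ?_)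
  · rintro π ⟨hπ, -, hrank⟩
    exact hπ.ofHooks_angPart hrank
  · rintro α ⟨hα, -, hgap⟩
    exact angPart_ofHooks hgap hα
  · rintro π ⟨hπ, rfl, -⟩
    refine ⟨hπ.isPartition_angPart, hπ.size_angPart, fun i hi hid => ?_⟩
    exact hπ.angPart_succ_add_two_le hi (hπ.len_angPart ▸ hid)
  · rintro α ⟨hα, rfl, hgap⟩
    exact ⟨isPartition_ofHooks hgap hα, size_ofHooks hgap hα, fun i => rank_ofHooks hgap hα⟩
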